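/- arXiv:2007.06964 — 3 statements merged into one kernel-verified Lean document; each statement's English description precedes it below -/
import Mathlib

section
/- Push-forward representation yields solutions: Assume v : [0,1]×ℝ^d → ℝ^d and g : [0,1]×ℝ^d → ℝ are Borel maps satisfying ∫₀¹ (sup_{x∈ℝ^d}|v(t,x)| + Lip(v(t,·),ℝ^d)) dt < ∞และ ∫₀¹ (sup_{x∈ℝ^d}|g(t,x)| + Lip(g(t,·),ℝ^d)) dt < ∞. Let ρ₀ ∈ M⁺(ℝ^d), let X_x denote the unique maximal solution of X'(t) = v(t,X(t)), X(0) = x, defined on a maximal interval of length τ(x), and suppose there exists t̄ ∈ (0,1] such that τ(x) > t̄ for ρ₀-a.e. x ∈ ℝ^d. Then the map t ↦ ρ_t := (X_x(t))_#( ρ₀ · e^{∫₀^t g(s,X_x(s)) ds} ) (push-forward in the space variable) is a narrowly continuous solution of ∂_t ρ_t + div(v ρ_t) = g ρ_t in (0,t̄)×ℝ^d in the distributional sense. -/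
open MeasureTheory Set Filter Topology
open scoped ENNReal NNReal

noncomputable section

namespace Paper

abbrev Euc (d : ℕ) : Type := EuclideanSpace ℝ (Fin d)

abbrev XX (d : ℕ) : Type := ℝ × Euc d

variable {d : ℕ}

/-- `Ω` is the closure of a bounded domain (a nonempty bounded open connected set). -/
def IsClosureOfBoundedDomain (Ω : Set (Euc d)) : Prop :=
  ∃ U : Set (Euc d), IsOpen U ∧ U.Nonempty ∧ IsConnected U ∧
    Bornology.IsBounded U ∧ Ω = closure U

/-- `Ω` is the closure of a bounded convex domain. -/
def IsClosureOfBoundedConvexDomain (Ω : Set (Euc d)) : Prop :=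
  ∃ U : Set (Euc d), IsOpen U ∧ U.Nonempty ∧ Convex ℝ U ∧
    Bornology.IsBounded U ∧ Ω = closure U

/-- clamping of `ℝ` onto `[0,1]`. -/
def clamp (t : ℝ) : ℝ := max 0 (min 1 t)

/-- `t ↦ ρ t` is a narrowly continuous curve (on `[0,1]`) of finite positive
measures concentrated on `Ω`, i.e. an element of `C_w([0,1]; M⁺(Ω))`. -/
def NarrowCurve (Ω : Set (Euc d)) (ρ : ℝ → Measure (Euc d)) : Prop :=
  (∀ t ∈ Icc (0:ℝ) 1, ρ t Ωᶜ = 0 ∧ ρ t Set.univ ≠ ⊤) ∧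
  (∀ φ : Euc d → ℝ, Continuous φ →
      ContinuousOn (fun t => ∫ x, φ x ∂(ρ t)) (Icc (0:ℝ) 1))

/-- Test functions for the continuity equation on `X_Ω = (0,1) × Ω` (no-flux form:
compact support in time, free at the spatial boundary). -/
def IsTest (φ : XX d → ℝ) : Prop :=
  ContDiff ℝ (⊤ : ℕ∞) φ ∧ HasCompactSupport φ ∧
    tsupport φ ⊆ Ioo (0:ℝ) 1 ×ˢ (Set.univ : Set (Euc d))

/-- Distributional solution of `∂ₜ ρ + div (v ρ) = g ρ`. -/
def SolvesCE (ρ : ℝ → Measure (Euc d)) (v : XX d → Euc d) (g : XX d → ℝ) : Prop :=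
  ∀ φ : XX d → ℝ, IsTest φ →
    (∫ t in Ioo (0:ℝ) 1,
      ∫ x, (fderiv ℝ φ (t, x) (1, v (t, x)) + φ (t, x) * g (t, x)) ∂(ρ t)) = 0

/-- The Hellinger–Kantorovich energy `∫₀¹ ∫ (|v|² + g²) dρ_t dt`. -/
def EnergyVG (ρ : ℝ → Measure (Euc d)) (v : XX d → Euc d) (g : XX d → ℝ) : ℝ≥0∞ :=
  ∫⁻ t in Ioo (0:ℝ) 1, ∫⁻ x, ENNReal.ofReal (‖v (t, x)‖ ^ 2 + g (t, x) ^ 2) ∂(ρ t)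

/-- The class `D_{v,g}` of finite-energy narrowly continuous solutions. -/
def Dvg (Ω : Set (Euc d)) (v : XX d → Euc d) (g : XX d → ℝ)
    (ρ : ℝ → Measure (Euc d)) : Prop :=
  NarrowCurve Ω ρ ∧ SolvesCE ρ v g ∧ EnergyVG ρ v g < ⊤

/-- total variation `‖ρ‖_{M(X_Ω)}` of `ρ = dt ⊗ ρ_t`. -/
def TVcurve (ρ : ℝ → Measure (Euc d)) : ℝ≥0∞ :=
  ∫⁻ t in Ioo (0:ℝ) 1, ρ t Set.univ

/-- The cone `𝒞_V = {h δ_γ : h ≥ 0, γ ∈ V}` of weighted Dirac masses. -/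
def coneSet (V : Set (Euc d)) : Set (Measure (Euc d)) :=
  {μ | ∃ (a : ℝ) (x : Euc d), 0 ≤ a ∧ x ∈ V ∧ μ = ENNReal.ofReal a • Measure.dirac x}

/-- The space `𝒮_V` of narrowly continuous curves `[0,1] → 𝒞_V`
(extended to `ℝ` by clamping). -/
structure SCurve (V : Set (Euc d)) where
  toFun : ℝ → Measure (Euc d)
  clamped : ∀ t, toFun t = toFun (clamp t)
  cone : ∀ t, toFun t ∈ coneSet V
  narrow : ∀ φ : Euc d → ℝ, Continuous φ → Continuous fun t => ∫ x, φ x ∂(toFun t)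

/-- The flat distance `D_F` between measures. -/
def flatDist (μ ν : Measure (Euc d)) : ℝ :=
  sSup {r : ℝ | ∃ φ : Euc d → ℝ, Continuous φ ∧ (∀ x, |φ x| ≤ 1) ∧ LipschitzWith 1 φ ∧
        r = (∫ x, φ x ∂μ) - ∫ x, φ x ∂ν}

/-- The supremum distance `D` on `𝒮_V`. -/
def Ddist {V : Set (Euc d)} (η₁ η₂ : SCurve V) : ℝ :=
  sSup {r : ℝ | ∃ t ∈ Icc (0:ℝ) 1, r = flatDist (η₁.toFun t) (η₂.toFun t)}

/-- The topology of `(𝒮_V, D)`, generated by the open `D`-balls. -/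
def Stop (V : Set (Euc d)) : TopologicalSpace (SCurve V) :=
  TopologicalSpace.generateFrom
    {s | ∃ (η₀ : SCurve V) (ε : ℝ), 0 < ε ∧ s = {η | Ddist η₀ η < ε}}

/-- The Borel σ-algebra of `(𝒮_V, D)`. -/
def Sborel (V : Set (Euc d)) : MeasurableSpace (SCurve V) := @borel _ (Stop V)

instance (V : Set (Euc d)) : MeasurableSpace (SCurve V) := Sborel V

/-- `‖h‖_∞` for a curve `ρ_t = h(t) δ_{γ(t)} ∈ 𝒮_V`. -/
def supMass {V : Set (Euc d)} (η : SCurve V) : ℝ≥0∞ :=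
  ⨆ t ∈ Icc (0:ℝ) 1, η.toFun t Set.univ

/-- `AC²[0,1]`: absolutely continuous on `[0,1]` with a.e. derivative in `L²`. -/
def AC2 {F : Type*} [NormedAddCommGroup F] [NormedSpace ℝ F] (f : ℝ → F) : Prop :=
  ∃ f' : ℝ → F, IntegrableOn f' (Icc (0:ℝ) 1) ∧
    IntegrableOn (fun t => ‖f' t‖ ^ 2) (Icc (0:ℝ) 1) ∧
    ∀ t ∈ Icc (0:ℝ) 1, f t = f 0 + ∫ s in (0:ℝ)..t, f' s

/-- `(γ, h)` represents the curve `η ∈ 𝒮_V`, i.e. `η_t = h(t) δ_{γ(t)}` on `[0,1]`. -/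
def Represents {V : Set (Euc d)} (η : SCurve V) (γ : ℝ → Euc d) (h : ℝ → ℝ) : Prop :=
  ∀ t ∈ Icc (0:ℝ) 1, 0 ≤ h t ∧ γ t ∈ V ∧
    η.toFun t = ENNReal.ofReal (h t) • Measure.dirac (γ t)

/-- The set `H_V ⊆ 𝒮_V` of curves `h(t)δ_{γ(t)}` with `h, √h ∈ AC²[0,1]`,
`√h γ ∈ AC²([0,1];ℝ^d)`. -/
def MemH (V : Set (Euc d)) (η : SCurve V) : Prop :=
  ∃ (γ : ℝ → Euc d) (h : ℝ → ℝ), Represents η γ h ∧ AC2 h ∧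
    AC2 (fun t => Real.sqrt (h t)) ∧ AC2 (fun t => Real.sqrt (h t) • γ t)

/-- The set `H_V^{v,g}`: curves in `H_V` solving the characteristic system
`γ' = v(t,γ)` a.e. on `{h>0}` and `h' = g(t,γ) h` a.e. on `(0,1)`. -/
def MemHvg (V : Set (Euc d)) (v : XX d → Euc d) (g : XX d → ℝ) (η : SCurve V) : Prop :=
  ∃ (γ : ℝ → Euc d) (h : ℝ → ℝ), Represents η γ h ∧ AC2 h ∧
    AC2 (fun t => Real.sqrt (h t)) ∧ AC2 (fun t => Real.sqrt (h t) • γ t) ∧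
    (∀ᵐ t ∂(volume.restrict {t | t ∈ Ioo (0:ℝ) 1 ∧ 0 < h t}),
        HasDerivAt γ (v (t, γ t)) t) ∧
    (∀ᵐ t ∂(volume.restrict (Ioo (0:ℝ) 1)),
        HasDerivAt h (g (t, γ t) * h t) t)

/-- The set `𝒮*_V` of curves whose positivity set `{h > 0}` is `[0,1] ∩ (-∞, τ)`. -/
def MemSstar {V : Set (Euc d)} (η : SCurve V) : Prop :=
  ∃ τ : ℝ, {t | t ∈ Icc (0:ℝ) 1 ∧ η.toFun t Set.univ ≠ 0} = Icc (0:ℝ) 1 ∩ Iio τ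

/-- The vanishing time `τ(γ,h) = min { t ∈ [0,1] : h(t) = 0 }` (`∞` if none). -/
def tauS {V : Set (Euc d)} (η : SCurve V) : ℝ≥0∞ :=
  sInf {c : ℝ≥0∞ | ∃ t ∈ Icc (0:ℝ) 1, η.toFun t Set.univ = 0 ∧ c = ENNReal.ofReal t}


open Classical in
/-- The integrand `Ψ_δ(t,x,y)`. -/
def Psi (δ : ℝ) (t : ℝ) (x : Euc d) (y : ℝ) : ℝ≥0∞ :=
  if 0 < t then ENNReal.ofReal ((‖x‖ ^ 2 + δ ^ 2 * y ^ 2) / (2 * t))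
  else if t = 0 ∧ x = 0 ∧ y = 0 then 0 else ⊤

/-- `u` is a density of the signed measure `σ` with respect to `lam`. -/
def IsDensityS (σ : SignedMeasure (XX d)) (lam : Measure (XX d)) (u : XX d → ℝ) : Prop :=
  ∀ s : Set (XX d), MeasurableSet s → σ s = ∫ x in s, u x ∂lam

/-- `w` is a density of the vector measure `m` with respect to `lam`. -/
def IsDensityV (m : VectorMeasure (XX d) (Euc d)) (lam : Measure (XX d))
    (w : XX d → Euc d) : Prop :=
  ∀ s : Set (XX d), MeasurableSet s → m s = ∫ x in s, w x ∂lam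

/-- `r` is a density of the positive measure `P` with respect to `lam`. -/
def IsDensityP (P : Measure (XX d)) (lam : Measure (XX d)) (r : XX d → ℝ) : Prop :=
  ∀ s : Set (XX d), MeasurableSet s → P s = ∫⁻ x in s, ENNReal.ofReal (r x) ∂lam

/-- `(P, m, μ)` is a measure solution of `∂ₜ ρ + div m = μ` (with `P` positive). -/
def SolvesCEMeas (P : Measure (XX d)) (m : VectorMeasure (XX d) (Euc d))
    (μ : SignedMeasure (XX d)) : Prop :=
  ∀ (lam : Measure (XX d)), IsFiniteMeasure lam →
    ∀ (w : XX d → Euc d) (u : XX d → ℝ), Measurable w → Measurable u →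
      IsDensityV m lam w → IsDensityS μ lam u →
      ∀ φ : XX d → ℝ, IsTest φ →
        ((∫ x, fderiv ℝ φ x ((1:ℝ), (0 : Euc d)) ∂P) +
          (∫ x, fderiv ℝ φ x ((0:ℝ), w x) ∂lam) + ∫ x, φ x * u x ∂lam) = 0

/-- The Wasserstein–Fisher–Rao energy `B_δ(ρ,m,μ)` for a positive `ρ`. -/
def BdeltaMeas (δ : ℝ) (P : Measure (XX d)) (m : VectorMeasure (XX d) (Euc d))
    (μ : SignedMeasure (XX d)) : ℝ≥0∞ :=
  sInf {c : ℝ≥0∞ | ∃ lam : Measure (XX d), IsFiniteMeasure lam ∧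
    ∃ (r : XX d → ℝ) (w : XX d → Euc d) (u : XX d → ℝ),
      Measurable r ∧ Measurable w ∧ Measurable u ∧ (∀ x, 0 ≤ r x) ∧
      IsDensityP P lam r ∧ IsDensityV m lam w ∧ IsDensityS μ lam u ∧
      c = ∫⁻ x, Psi δ (r x) (w x) (u x) ∂lam}

open Classical in
/-- The coercive energy `J_{α,β,δ}(ρ,m,μ)` for a positive `ρ`. -/
def JMeas (α β δ : ℝ) (P : Measure (XX d)) (m : VectorMeasure (XX d) (Euc d))
    (μ : SignedMeasure (XX d)) : ℝ≥0∞ :=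
  if SolvesCEMeas P m μ then
    ENNReal.ofReal β * BdeltaMeas δ P m μ + ENNReal.ofReal α * P Set.univ
  else ⊤

/-- `(ρ, m, μ)` is a measure solution of `∂ₜ ρ + div m = μ` (signed case). -/
def SolvesCESigned (ρ : SignedMeasure (XX d)) (m : VectorMeasure (XX d) (Euc d))
    (μ : SignedMeasure (XX d)) : Prop :=
  ∀ (lam : Measure (XX d)), IsFiniteMeasure lam →
    ∀ (r : XX d → ℝ) (w : XX d → Euc d) (u : XX d → ℝ),
      Measurable r → Measurable w → Measurable u →
      IsDensityS ρ lam r → IsDensityV m lam w → IsDensityS μ lam u →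
      ∀ φ : XX d → ℝ, IsTest φ →
        (∫ x, (fderiv ℝ φ x ((1:ℝ), (0 : Euc d)) * r x
          + fderiv ℝ φ x ((0:ℝ), w x) + φ x * u x) ∂lam) = 0

/-- The Wasserstein–Fisher–Rao energy `B_δ(ρ,m,μ)`, signed case. -/
def BdeltaSigned (δ : ℝ) (ρ : SignedMeasure (XX d)) (m : VectorMeasure (XX d) (Euc d))
    (μ : SignedMeasure (XX d)) : ℝ≥0∞ :=
  sInf {c : ℝ≥0∞ | ∃ lam : Measure (XX d), IsFiniteMeasure lam ∧
    ∃ (r : XX d → ℝ) (w : XX d → Euc d) (u : XX d → ℝ),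
      Measurable r ∧ Measurable w ∧ Measurable u ∧
      IsDensityS ρ lam r ∧ IsDensityV m lam w ∧ IsDensityS μ lam u ∧
      c = ∫⁻ x, Psi δ (r x) (w x) (u x) ∂lam}

open Classical in
/-- The coercive energy `J_{α,β,δ}(ρ,m,μ)`, signed case. -/
def JSigned (α β δ : ℝ) (ρ : SignedMeasure (XX d)) (m : VectorMeasure (XX d) (Euc d))
    (μ : SignedMeasure (XX d)) : ℝ≥0∞ :=
  if SolvesCESigned ρ m μ then
    ENNReal.ofReal β * BdeltaSigned δ ρ m μ
      + ENNReal.ofReal α * ρ.totalVariation Set.univ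
  else ⊤

/-- A signed measure on `X = ℝ × ℝ^d` is concentrated on `X_Ω = (0,1) × Ω`. -/
def ConcS (Ω : Set (Euc d)) (ρ : SignedMeasure (XX d)) : Prop :=
  ∀ s : Set (XX d), MeasurableSet s → s ⊆ (Ioo (0:ℝ) 1 ×ˢ Ω)ᶜ → ρ s = 0

/-- A vector measure on `X = ℝ × ℝ^d` is concentrated on `X_Ω = (0,1) × Ω`. -/
def ConcV (Ω : Set (Euc d)) (m : VectorMeasure (XX d) (Euc d)) : Prop :=
  ∀ s : Set (XX d), MeasurableSet s → s ⊆ (Ioo (0:ℝ) 1 ×ˢ Ω)ᶜ → m s = 0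

/-- Integral of `φ` against a signed measure. -/
def sInt {α : Type*} [MeasurableSpace α] (σ : SignedMeasure α) (φ : α → ℝ) : ℝ :=
  (∫ x, φ x ∂σ.toJordanDecomposition.posPart) -
    ∫ x, φ x ∂σ.toJordanDecomposition.negPart

/-- Triples `(ρ, m, μ) ∈ M(X_Ω) × M(X_Ω; ℝ^d) × M(X_Ω)`. -/
abbrev Mtriple (d : ℕ) : Type :=
  SignedMeasure (XX d) × VectorMeasure (XX d) (Euc d) × SignedMeasure (XX d)

/-- `P` is the measure `dt ⊗ ρ_t` associated with the curve `η ∈ 𝒮_V`. -/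
def CurveMeasure {V : Set (Euc d)} (η : SCurve V) (P : Measure (XX d)) : Prop :=
  ∀ s : Set (XX d), MeasurableSet s →
    P s = ∫⁻ t in Ioo (0:ℝ) 1, η.toFun t {x | (t, x) ∈ s}

/-- `h'` and `γ'` are the a.e. derivatives of `h` on `(0,1)` and of `γ` on `{h>0}`. -/
def HasAEDerivs (γ : ℝ → Euc d) (h : ℝ → ℝ) (γ' : ℝ → Euc d) (h' : ℝ → ℝ) : Prop :=
  (∀ᵐ t ∂(volume.restrict (Ioo (0:ℝ) 1)), HasDerivAt h (h' t) t) ∧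
  (∀ᵐ t ∂(volume.restrict {t | t ∈ Ioo (0:ℝ) 1 ∧ 0 < h t}), HasDerivAt γ (γ' t) t)

/-- The triple `p = (ρ, m, μ)` is of characteristic form
`ρ = h dt ⊗ δ_γ`, `m = γ' ρ`, `μ = h' dt ⊗ δ_γ` with the regularity of `H_Ω`. -/
def CharRepr (Ω : Set (Euc d)) (γ : ℝ → Euc d) (h : ℝ → ℝ) (γ' : ℝ → Euc d)
    (h' : ℝ → ℝ) (p : Mtriple d) : Prop :=
  (∀ t ∈ Icc (0:ℝ) 1, 0 ≤ h t ∧ γ t ∈ Ω) ∧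
  AC2 h ∧ AC2 (fun t => Real.sqrt (h t)) ∧ AC2 (fun t => Real.sqrt (h t) • γ t) ∧
  (∀ φ : Euc d → ℝ, Continuous φ →
      ContinuousOn (fun t => h t * φ (γ t)) (Icc (0:ℝ) 1)) ∧
  HasAEDerivs γ h γ' h' ∧
  (∀ s : Set (XX d), MeasurableSet s →
      p.1 s = ∫ t in Ioo (0:ℝ) 1, Set.indicator {u : ℝ | (u, γ u) ∈ s} h t) ∧
  (∀ s : Set (XX d), MeasurableSet s →
      p.2.1 s = ∫ t in Ioo (0:ℝ) 1,
        Set.indicator {u : ℝ | (u, γ u) ∈ s} (fun u => h u • γ' u) t) ∧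
  (∀ s : Set (XX d), MeasurableSet s →
      p.2.2 s = ∫ t in Ioo (0:ℝ) 1, Set.indicator {u : ℝ | (u, γ u) ∈ s} h' t)

/-- The set `𝒞` of extremal characteristic triples. -/
def MemC (α β δ : ℝ) (Ω : Set (Euc d)) (p : Mtriple d) : Prop :=
  ∃ (γ : ℝ → Euc d) (h : ℝ → ℝ) (γ' : ℝ → Euc d) (h' : ℝ → ℝ),
    CharRepr Ω γ h γ' h' p ∧
    IsPreconnected {t | t ∈ Icc (0:ℝ) 1 ∧ 0 < h t} ∧
    JSigned α β δ p.1 p.2.1 p.2.2 = 1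


/-- Curves in `C_w([0,1]; M(Ω))`: narrowly continuous curves of signed measures
concentrated on `Ω`, extended to `ℝ` by clamping. -/
def IsCwCurve (Ω : Set (Euc d)) (f : ℝ → SignedMeasure (Euc d)) : Prop :=
  (∀ t, f t = f (clamp t)) ∧
  (∀ t, ∀ s : Set (Euc d), MeasurableSet s → s ⊆ Ωᶜ → f t s = 0) ∧
  (∀ φ : Euc d → ℝ, Continuous φ → Continuous fun t => sInt (f t) φ)

/-- `r` is a density with respect to `lam` of the measure `dt ⊗ f_t` on `X`. -/
def CwDensity (f : ℝ → SignedMeasure (Euc d)) (lam : Measure (XX d))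
    (r : XX d → ℝ) : Prop :=
  ∀ s : Set (XX d), MeasurableSet s →
    (∫ t in Ioo (0:ℝ) 1,
        sInt (f t) ({x : Euc d | (t, x) ∈ s}.indicator fun _ => (1:ℝ)))
      = ∫ x in s, r x ∂lam

/-- `(f, m, μ)` is a measure solution of `∂ₜ ρ + div m = μ`, `f` a curve. -/
def SolvesCECw (f : ℝ → SignedMeasure (Euc d)) (m : VectorMeasure (XX d) (Euc d))
    (μ : SignedMeasure (XX d)) : Prop :=
  ∀ (lam : Measure (XX d)), IsFiniteMeasure lam →
    ∀ (w : XX d → Euc d) (u : XX d → ℝ), Measurable w → Measurable u →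
      IsDensityV m lam w → IsDensityS μ lam u →
      ∀ φ : XX d → ℝ, IsTest φ →
        ((∫ t in Ioo (0:ℝ) 1, sInt (f t) fun x => fderiv ℝ φ (t, x) ((1:ℝ), (0 : Euc d)))
          + (∫ x, fderiv ℝ φ x ((0:ℝ), w x) ∂lam) + ∫ x, φ x * u x ∂lam) = 0

/-- `B_δ(dt ⊗ f_t, m, μ)`. -/
def BdeltaCw (δ : ℝ) (f : ℝ → SignedMeasure (Euc d)) (m : VectorMeasure (XX d) (Euc d))
    (μ : SignedMeasure (XX d)) : ℝ≥0∞ :=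
  sInf {c : ℝ≥0∞ | ∃ lam : Measure (XX d), IsFiniteMeasure lam ∧
    ∃ (r : XX d → ℝ) (w : XX d → Euc d) (u : XX d → ℝ),
      Measurable r ∧ Measurable w ∧ Measurable u ∧
      CwDensity f lam r ∧ IsDensityV m lam w ∧ IsDensityS μ lam u ∧
      c = ∫⁻ x, Psi δ (r x) (w x) (u x) ∂lam}

/-- `‖dt ⊗ f_t‖_{M(X_Ω)}`. -/
def TVCw (f : ℝ → SignedMeasure (Euc d)) : ℝ≥0∞ :=
  ∫⁻ t in Ioo (0:ℝ) 1, (f t).totalVariation Set.univ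

open Classical in
/-- `J_{α,β,δ}(dt ⊗ f_t, m, μ)`. -/
def JCw (α β δ : ℝ) (f : ℝ → SignedMeasure (Euc d)) (m : VectorMeasure (XX d) (Euc d))
    (μ : SignedMeasure (XX d)) : ℝ≥0∞ :=
  if SolvesCECw f m μ then
    ENNReal.ofReal β * BdeltaCw δ f m μ + ENNReal.ofReal α * TVCw f
  else ⊤

/-- The set `𝒞` in curve form: `(f, m, μ)` with `f_t = h(t) δ_{γ(t)}`,
`m = h γ' dt ⊗ δ_γ`, `μ = h' dt ⊗ δ_γ`, with `H_Ω`-regularity, connected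
positivity set and unit energy. -/
def MemCCw (α β δ : ℝ) (Ω : Set (Euc d)) (f : ℝ → SignedMeasure (Euc d))
    (m : VectorMeasure (XX d) (Euc d)) (μ : SignedMeasure (XX d)) : Prop :=
  ∃ (γ : ℝ → Euc d) (h : ℝ → ℝ) (γ' : ℝ → Euc d) (h' : ℝ → ℝ),
    (∀ t ∈ Icc (0:ℝ) 1, 0 ≤ h t ∧ γ t ∈ Ω) ∧
    AC2 h ∧ AC2 (fun t => Real.sqrt (h t)) ∧ AC2 (fun t => Real.sqrt (h t) • γ t) ∧
    (∀ φ : Euc d → ℝ, Continuous φ →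
        ContinuousOn (fun t => h t * φ (γ t)) (Icc (0:ℝ) 1)) ∧
    HasAEDerivs γ h γ' h' ∧
    (∀ t, f t = h (clamp t) • (Measure.dirac (γ (clamp t))).toSignedMeasure) ∧
    (∀ s : Set (XX d), MeasurableSet s →
        m s = ∫ t in Ioo (0:ℝ) 1,
          Set.indicator {u : ℝ | (u, γ u) ∈ s} (fun u => h u • γ' u) t) ∧
    (∀ s : Set (XX d), MeasurableSet s →
        μ s = ∫ t in Ioo (0:ℝ) 1, Set.indicator {u : ℝ | (u, γ u) ∈ s} h' t) ∧
    IsPreconnected {t | t ∈ Icc (0:ℝ) 1 ∧ 0 < h t} ∧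
    JCw α β δ f m μ = 1

/-- The mollified density `ρ_t ∗ ξ_ε + ε χ_V`. -/
def mollDens (V : Set (Euc d)) (ρ : ℝ → Measure (Euc d)) (ξ : Euc d → ℝ) (ε : ℝ)
    (t : ℝ) (x : Euc d) : ℝ :=
  (∫ y, (ε ^ d)⁻¹ * ξ (ε⁻¹ • (x - y)) ∂(ρ t)) + ε * V.indicator (fun _ => (1:ℝ)) x

/-- The mollified measure `ρ_t^ε = (ρ_t ∗ ξ_ε + ε χ_V) dx`. -/
def mollRho (V : Set (Euc d)) (ρ : ℝ → Measure (Euc d)) (ξ : Euc d → ℝ) (ε : ℝ) :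
    ℝ → Measure (Euc d) :=
  fun t => volume.withDensity fun x => ENNReal.ofReal (mollDens V ρ ξ ε t x)

open Classical in
/-- The mollified velocity field `v^ε = ((v ρ_t) ∗ ξ_ε) / ρ_t^ε`. -/
def mollV (V : Set (Euc d)) (ρ : ℝ → Measure (Euc d)) (v : XX d → Euc d)
    (ξ : Euc d → ℝ) (ε : ℝ) : XX d → Euc d :=
  fun p => if mollDens V ρ ξ ε p.1 p.2 = 0 then 0 else
    (mollDens V ρ ξ ε p.1 p.2)⁻¹ •
      ∫ y, ((ε ^ d)⁻¹ * ξ (ε⁻¹ • (p.2 - y))) • v (p.1, y) ∂(ρ p.1)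

open Classical in
/-- The mollified growth field `g^ε = ((g ρ_t) ∗ ξ_ε) / ρ_t^ε`. -/
def mollG (V : Set (Euc d)) (ρ : ℝ → Measure (Euc d)) (g : XX d → ℝ)
    (ξ : Euc d → ℝ) (ε : ℝ) : XX d → ℝ :=
  fun p => if mollDens V ρ ξ ε p.1 p.2 = 0 then 0 else
    (mollDens V ρ ξ ε p.1 p.2)⁻¹ *
      ∫ y, ((ε ^ d)⁻¹ * ξ (ε⁻¹ • (p.2 - y))) * g (p.1, y) ∂(ρ p.1)

end Paper

/-!
For `ρ₀`-a.e. `x`, write `G x t = ∫₀ᵗ g (s, X x s) ds`. Along the characteristic, the function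
`t ↦ φ (t, X x t) * exp (G x t)` is a locally Lipschitz function of the absolutely continuous curve
`t ↦ (t, X x t, G x t)`, hence absolutely continuous. Its derivative is a.e. the weak integrand
`(∂ₜφ + ∇φ · v + φ g) (t, X x t) * exp (G x t)`, and it vanishes at `0` and at `t̄`, so the time
integral of that derivative is zero. Integrating over `x` and swapping the integrals (Fubini,
justified by the bounds `Cv`, `Cg` and `exp (G x t) ≤ exp ∫₀¹ Cg`) gives the weak equation.
Narrow continuity is dominated convergence, with the same bound on the weight.
-/

namespace AbsolutelyContinuousOnInterval

variable {X Y : Type*} [PseudoMetricSpace X] [PseudoMetricSpace Y] {a b : ℝ}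

theorem of_dist_le_mul {f : ℝ → X} {g : ℝ → Y} (hg : AbsolutelyContinuousOnInterval g a b)
    (K : ℝ) (hfg : ∀ x ∈ uIcc a b, ∀ y ∈ uIcc a b, dist (f x) (f y) ≤ K * dist (g x) (g y)) :
    AbsolutelyContinuousOnInterval f a b := by
  unfold AbsolutelyContinuousOnInterval at hg ⊢
  refine squeeze_zero' (Eventually.of_forall fun _ => Finset.sum_nonneg fun _ _ => dist_nonneg)
    ?_ (by simpa using hg.const_mul K)
  filter_upwards [mem_inf_of_right (mem_principal_self _)] with E hE
  rw [Finset.mul_sum]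
  exact Finset.sum_le_sum fun i hi => hfg _ (hE.1 i hi).1 _ (hE.1 i hi).2

theorem prodMk {f : ℝ → X} {g : ℝ → Y} (hf : AbsolutelyContinuousOnInterval f a b)
    (hg : AbsolutelyContinuousOnInterval g a b) :
    AbsolutelyContinuousOnInterval (fun t => (f t, g t)) a b := by
  unfold AbsolutelyContinuousOnInterval at hf hg ⊢
  refine squeeze_zero (fun _ => Finset.sum_nonneg fun _ _ => dist_nonneg) (fun E => ?_)
    (by simpa using hf.add hg)
  rw [← Finset.sum_add_distrib]
  exact Finset.sum_le_sum fun i _ => by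
    rw [Prod.dist_eq]; exact max_le_add_of_nonneg dist_nonneg dist_nonneg

end AbsolutelyContinuousOnInterval

theorem LipschitzOnWith.comp_absolutelyContinuousOnInterval {X Y : Type*} [PseudoMetricSpace X]
    [PseudoMetricSpace Y] {f : X → Y} {K : ℝ≥0} {s : Set X} {γ : ℝ → X} {a b : ℝ}
    (hf : LipschitzOnWith K f s) (hγ : AbsolutelyContinuousOnInterval γ a b)
    (hγs : MapsTo γ (uIcc a b) s) : AbsolutelyContinuousOnInterval (f ∘ γ) a b :=
  hγ.of_dist_le_mul K fun _ hx _ hy => hf.dist_le_mul _ (hγs hx) _ (hγs hy)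

theorem LocallyLipschitz.comp_absolutelyContinuousOnInterval {X Y : Type*}
    [SeminormedAddCommGroup X] [PseudoMetricSpace Y] {f : X → Y} {γ : ℝ → X} {a b : ℝ}
    (hf : LocallyLipschitz f) (hγ : AbsolutelyContinuousOnInterval γ a b) :
    AbsolutelyContinuousOnInterval (f ∘ γ) a b := by
  obtain ⟨K, hK⟩ := LocallyLipschitzOn.exists_lipschitzOnWith_of_compact
    (isCompact_uIcc.image_of_continuousOn hγ.continuousOn) hf.locallyLipschitzOn
  exact hK.comp_absolutelyContinuousOnInterval hγ (mapsTo_image _ _)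

theorem IntervalIntegrable.absolutelyContinuousOnInterval_primitive {E : Type*}
    [NormedAddCommGroup E] [NormedSpace ℝ E] {w : ℝ → E} {a b : ℝ}
    (hw : IntervalIntegrable w volume a b) :
    AbsolutelyContinuousOnInterval (fun t => ∫ s in a..t, w s) a b := by
  refine (hw.norm.absolutelyContinuousOnInterval_intervalIntegral left_mem_uIcc).of_dist_le_mul 1
    fun x hx y hy => ?_
  have hwx := hw.mono_set (uIcc_subset_uIcc left_mem_uIcc hx)
  have hwy := hw.mono_set (uIcc_subset_uIcc left_mem_uIcc hy)
  rw [one_mul, dist_eq_norm, dist_eq_norm, intervalIntegral.integral_interval_sub_left hwx hwy,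
    intervalIntegral.integral_interval_sub_left hwx.norm hwy.norm, Real.norm_eq_abs]
  exact intervalIntegral.norm_integral_le_abs_integral_norm

theorem integral_fderiv_along_primitive_eq_sub {E : Type*} [NormedAddCommGroup E]
    [NormedSpace ℝ E] [CompleteSpace E] {Φ : ℝ × E → ℝ} (hΦ : ContDiff ℝ 1 Φ) {w : ℝ → E}
    {a b : ℝ} (hw : IntervalIntegrable w volume a b) (y : E) :
    ∫ t in a..b, fderiv ℝ Φ (t, y + ∫ s in a..t, w s) (1, w t)
      = Φ (b, y + ∫ s in a..b, w s) - Φ (a, y) := by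
  set γ : ℝ → ℝ × E := fun t => (t, y + ∫ s in a..t, w s)
  have hγ : AbsolutelyContinuousOnInterval γ a b :=
    (LipschitzWith.id.lipschitzOnWith.absolutelyContinuousOnInterval).prodMk
      (hw.absolutelyContinuousOnInterval_primitive.of_dist_le_mul 1 fun _ _ _ _ => by
        rw [dist_add_left, one_mul])
  -- `Φ ∘ γ` is absolutely continuous, and at Lebesgue points of `w` the chain rule gives its
  -- derivative.
  have hFTC := (hΦ.locallyLipschitz.comp_absolutelyContinuousOnInterval hγ).integral_deriv_eq_sub
  simp only [Function.comp_apply, γ, intervalIntegral.integral_same, add_zero] at hFTC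
  rw [← hFTC]
  refine intervalIntegral.integral_congr_ae ?_
  filter_upwards [hw.ae_hasDerivAt_integral] with t ht htab
  have hγt : HasDerivAt γ (1, w t) t :=
    (hasDerivAt_id t).prodMk ((ht (uIoc_subset_uIcc htab) a left_mem_uIcc).const_add y)
  exact (((hΦ.differentiable one_ne_zero _).hasFDerivAt.comp_hasDerivAt t hγt).deriv).symm

theorem fderiv_mul_exp_apply {E : Type*} [NormedAddCommGroup E] [NormedSpace ℝ E]
    {φ : ℝ × E → ℝ} {t : ℝ} {y : E} (hφ : DifferentiableAt ℝ φ (t, y)) (a τ b : ℝ) (u : E) :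
    fderiv ℝ (fun p : ℝ × (E × ℝ) => φ (p.1, p.2.1) * Real.exp p.2.2) (t, (y, a)) (τ, (u, b))
      = (fderiv ℝ φ (t, y) (τ, u) + φ (t, y) * b) * Real.exp a := by
  have hφ' : HasFDerivAt (fun p : ℝ × (E × ℝ) => φ (p.1, p.2.1))
      ((fderiv ℝ φ (t, y)).comp ((ContinuousLinearMap.fst ℝ ℝ (E × ℝ)).prod
        ((ContinuousLinearMap.fst ℝ E ℝ).comp (ContinuousLinearMap.snd ℝ ℝ (E × ℝ)))))
      (t, (y, a)) :=
    hφ.hasFDerivAt.comp (t, (y, a)) (hasFDerivAt_fst.prodMk hasFDerivAt_snd.fst)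
  have hexp := (hasFDerivAt_snd (p := (t, (y, a)))).snd.exp
  rw [(hφ'.fun_mul hexp).fderiv]
  simp only [add_apply, smul_apply,
    ContinuousLinearMap.comp_apply, ContinuousLinearMap.prod_apply,
    ContinuousLinearMap.coe_fst', ContinuousLinearMap.coe_snd', smul_eq_mul]
  ring

theorem integral_map_withDensity_ofReal {α β : Type*} [MeasurableSpace α] [MeasurableSpace β]
    {μ : Measure α} {T : α → β} (hT : Measurable T) {h : α → ℝ} (hh : Measurable h)
    (h0 : ∀ x, 0 ≤ h x) {f : β → ℝ} (hf : Measurable f) :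
    ∫ y, f y ∂(μ.withDensity fun x => ENNReal.ofReal (h x)).map T = ∫ x, f (T x) * h x ∂μ := by
  rw [integral_map hT.aemeasurable hf.aestronglyMeasurable,
    integral_withDensity_eq_integral_toReal_smul hh.ennreal_ofReal
      (Eventually.of_forall fun _ => ENNReal.ofReal_lt_top)]
  simp only [ENNReal.toReal_ofReal (h0 _), smul_eq_mul, mul_comm]

theorem Measurable.intervalIntegral_primitive {α : Type*} [MeasurableSpace α] {f : α → ℝ → ℝ}
    (hf : Measurable (Function.uncurry f)) (a : ℝ) :
    Measurable fun p : α × ℝ => ∫ s in a..p.2, f p.1 s := by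
  have hIoc : ∀ l u : α × ℝ → ℝ, Measurable l → Measurable u →
      Measurable fun p : α × ℝ => ∫ s in Ioc (l p) (u p), f p.1 s := by
    intro l u hl hu
    have hS : MeasurableSet {q : (α × ℝ) × ℝ | q.2 ∈ Ioc (l q.1) (u q.1)} :=
      (measurableSet_lt (hl.comp measurable_fst) measurable_snd).inter
        (measurableSet_le measurable_snd (hu.comp measurable_fst))
    have hF :=
      ((hf.comp (measurable_fst.fst.prodMk measurable_snd)).indicator hS).stronglyMeasurable
    convert (hF.integral_prod_right' (ν := volume)).measurable using 2 with p
    rw [← integral_indicator measurableSet_Ioc]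
    rfl
  simp only [intervalIntegral]
  exact (hIoc _ _ measurable_const measurable_snd).sub (hIoc _ _ measurable_snd measurable_const)

namespace Paper

variable {d : ℕ}

def growthExponent (g : XX d → ℝ) (X : Euc d → ℝ → Euc d) (x : Euc d) (t : ℝ) : ℝ :=
  ∫ s in (0:ℝ)..t, g (s, X x s)

def pushforwardCurve (ρ₀ : Measure (Euc d)) (g : XX d → ℝ) (X : Euc d → ℝ → Euc d) (t : ℝ) :
    Measure (Euc d) :=
  (ρ₀.withDensity fun x => ENNReal.ofReal (Real.exp (growthExponent g X x t))).map fun x => X x t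

def weakIntegrand (φ : XX d → ℝ) (v : XX d → Euc d) (g : XX d → ℝ) (p : XX d) : ℝ :=
  fderiv ℝ φ p (1, v p) + φ p * g p

theorem measurable_growthExponent {g : XX d → ℝ} (hg : Measurable g) {X : Euc d → ℝ → Euc d}
    (hX : Measurable (Function.uncurry X)) :
    Measurable fun p : Euc d × ℝ => growthExponent g X p.1 p.2 :=
  Measurable.intervalIntegral_primitive (f := fun x s => g (s, X x s))
    (hg.comp (measurable_snd.prodMk hX)) 0

theorem integral_pushforwardCurve {g : XX d → ℝ} (hg : Measurable g) {X : Euc d → ℝ → Euc d}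
    (hX : Measurable (Function.uncurry X)) (ρ₀ : Measure (Euc d)) {f : Euc d → ℝ}
    (hf : Measurable f) (t : ℝ) :
    ∫ y, f y ∂pushforwardCurve ρ₀ g X t
      = ∫ x, f (X x t) * Real.exp (growthExponent g X x t) ∂ρ₀ :=
  integral_map_withDensity_ofReal (hX.comp measurable_prodMk_right)
    (Real.measurable_exp.comp ((measurable_growthExponent hg hX).comp measurable_prodMk_right))
    (fun _ => (Real.exp_pos _).le) hf

theorem intervalIntegrable_along_curve {F : Type*} [NormedAddCommGroup F] [MeasurableSpace F]
    [BorelSpace F] [SecondCountableTopology F] {f : XX d → F} (hf : Measurable f) {γ : ℝ → Euc d}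
    (hγ : Measurable γ) {C : ℝ → ℝ} (hC : IntegrableOn C (Ioo 0 1))
    (hfC : ∀ t ∈ Icc (0:ℝ) 1, ∀ y, ‖f (t, y)‖ ≤ C t) {T : ℝ} (hT : T ∈ Icc (0:ℝ) 1) :
    IntervalIntegrable (fun s => f (s, γ s)) volume 0 T := by
  have hCT : IntervalIntegrable C volume 0 T :=
    (intervalIntegrable_iff_integrableOn_Ioo_of_le hT.1).2
      (hC.mono_set (Ioo_subset_Ioo_right hT.2))
  refine hCT.mono_fun' (hf.comp (measurable_id.prodMk hγ)).aestronglyMeasurable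
    (ae_restrict_of_forall_mem measurableSet_uIoc fun s hs => hfC s ?_ _)
  rw [uIoc_of_le hT.1] at hs
  exact ⟨hs.1.le, hs.2.trans hT.2⟩

theorem growthExponent_le {g : XX d → ℝ} {Cg : ℝ → ℝ} (hCg : IntegrableOn Cg (Ioo 0 1))
    (hgC : ∀ t ∈ Icc (0:ℝ) 1, ∀ y, |g (t, y)| ≤ Cg t) (X : Euc d → ℝ → Euc d) (x : Euc d)
    {t : ℝ} (ht : t ∈ Icc (0:ℝ) 1) :
    growthExponent g X x t ≤ ∫ s in (0:ℝ)..1, Cg s := by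
  have hCg1 : IntervalIntegrable Cg volume 0 1 :=
    (intervalIntegrable_iff_integrableOn_Ioo_of_le zero_le_one).2 hCg
  calc growthExponent g X x t ≤ ‖growthExponent g X x t‖ := Real.le_norm_self _
    _ ≤ ∫ s in (0:ℝ)..t, Cg s :=
        intervalIntegral.norm_integral_le_of_norm_le ht.1
          (Eventually.of_forall fun s hs => hgC s ⟨hs.1.le, hs.2.trans ht.2⟩ _)
          (hCg1.mono_set (uIcc_subset_uIcc left_mem_uIcc (by rwa [uIcc_of_le zero_le_one])))
    _ ≤ ∫ s in (0:ℝ)..1, Cg s :=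
        intervalIntegral.integral_mono_interval le_rfl ht.1 ht.2
          (ae_restrict_of_forall_mem measurableSet_Ioc fun s hs =>
            (abs_nonneg _).trans (hgC s (Ioc_subset_Icc_self hs) 0)) hCg1

theorem continuousOn_integral_pushforwardCurve {v : XX d → Euc d} {g : XX d → ℝ}
    (hv : Measurable v) (hg : Measurable g) {Cv Cg : ℝ → ℝ} (hCv : IntegrableOn Cv (Ioo 0 1))
    (hvC : ∀ t ∈ Icc (0:ℝ) 1, ∀ y, ‖v (t, y)‖ ≤ Cv t) (hCg : IntegrableOn Cg (Ioo 0 1))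
    (hgC : ∀ t ∈ Icc (0:ℝ) 1, ∀ y, |g (t, y)| ≤ Cg t) (ρ₀ : Measure (Euc d)) [IsFiniteMeasure ρ₀]
    {X : Euc d → ℝ → Euc d} (hX : Measurable (Function.uncurry X)) {T : ℝ}
    (hT : T ∈ Icc (0:ℝ) 1)
    (hflow : ∀ᵐ x ∂ρ₀, ∀ t ∈ Icc (0:ℝ) T, X x t = x + ∫ s in (0:ℝ)..t, v (s, X x s))
    {φ : Euc d → ℝ} (hφ : Continuous φ) {M : ℝ} (hφM : ∀ y, |φ y| ≤ M) :
    ContinuousOn (fun t => ∫ y, φ y ∂pushforwardCurve ρ₀ g X t) (Icc 0 T) := by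
  have hXt : ∀ t, Measurable fun x => X x t := fun _ => hX.comp measurable_prodMk_right
  have hXx : ∀ x, Measurable (X x) := fun _ => hX.comp measurable_prodMk_left
  have hGt : ∀ t, Measurable fun x => growthExponent g X x t := fun _ =>
    (measurable_growthExponent hg hX).comp measurable_prodMk_right
  have hgX : ∀ x, IntervalIntegrable (fun s => g (s, X x s)) volume 0 T := fun x =>
    intervalIntegrable_along_curve hg (hXx x) hCg hgC hT
  refine ContinuousOn.congr (continuousOn_of_dominated
      (F := fun t x => φ (X x t) * Real.exp (growthExponent g X x t))
      (bound := fun _ => M * Real.exp (∫ s in (0:ℝ)..1, Cg s))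
      (fun t _ => ((hφ.measurable.comp (hXt t)).mul
        (Real.measurable_exp.comp (hGt t))).aestronglyMeasurable)
      (fun t ht => Eventually.of_forall fun x => ?_) (integrable_const _) ?_)
    (fun t _ => integral_pushforwardCurve hg hX ρ₀ hφ.measurable t)
  · rw [norm_mul, Real.norm_eq_abs, Real.norm_of_nonneg (Real.exp_pos _).le]
    exact mul_le_mul (hφM _) (Real.exp_le_exp.2 (growthExponent_le hCg hgC X x
      ⟨ht.1, ht.2.trans hT.2⟩)) (Real.exp_pos _).le ((abs_nonneg _).trans (hφM 0))
  · filter_upwards [hflow] with x hx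
    rw [← uIcc_of_le hT.1] at hx ⊢
    have hXc : ContinuousOn (X x) (uIcc 0 T) :=
      (continuousOn_const.add (intervalIntegral.continuousOn_primitive_interval'
        (intervalIntegrable_along_curve hv (hXx x) hCv hvC hT) left_mem_uIcc)).congr hx
    exact (hφ.comp_continuousOn hXc).mul (Real.continuous_exp.comp_continuousOn
      (intervalIntegral.continuousOn_primitive_interval' (hgX x) left_mem_uIcc))

theorem measurable_weakIntegrand {φ : XX d → ℝ} (hφ : ContDiff ℝ 1 φ) {v : XX d → Euc d}
    {g : XX d → ℝ} (hv : Measurable v) (hg : Measurable g) : Measurable (weakIntegrand φ v g) := by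
  have happly : Continuous fun q : (XX d →L[ℝ] ℝ) × XX d => q.1 q.2 :=
    isBoundedBilinearMap_apply.continuous
  have hpair : Measurable fun p : XX d => (fderiv ℝ φ p, ((1 : ℝ), v p)) :=
    (hφ.continuous_fderiv one_ne_zero).measurable.prodMk (measurable_const.prodMk hv)
  exact (happly.measurable.comp hpair).add (hφ.continuous.measurable.mul hg)

theorem abs_weakIntegrand_le {φ : XX d → ℝ} {A B : ℝ} (hA : ∀ p, ‖fderiv ℝ φ p‖ ≤ A)
    (hB : ∀ p, ‖φ p‖ ≤ B) (v : XX d → Euc d) (g : XX d → ℝ) (p : XX d) :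
    |weakIntegrand φ v g p| ≤ A * (1 + ‖v p‖) + B * |g p| := by
  have hpair : ‖((1 : ℝ), v p)‖ ≤ 1 + ‖v p‖ := by
    rw [Prod.norm_def, norm_one]
    exact max_le (le_add_of_nonneg_right (norm_nonneg _)) (le_add_of_nonneg_left zero_le_one)
  have hfd : |fderiv ℝ φ p (1, v p)| ≤ A * (1 + ‖v p‖) :=
    ((fderiv ℝ φ p).le_opNorm _).trans
      (mul_le_mul (hA p) hpair (norm_nonneg _) ((norm_nonneg _).trans (hA p)))
  have hφg : |φ p * g p| ≤ B * |g p| := by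
    rw [abs_mul, ← Real.norm_eq_abs (φ p)]
    exact mul_le_mul_of_nonneg_right (hB p) (abs_nonneg _)
  exact (abs_add_le _ _).trans (add_le_add hfd hφg)

theorem integral_weakIntegrand_along_characteristic_eq_zero {φ : XX d → ℝ}
    (hφ : ContDiff ℝ 1 φ) {T : ℝ} (hT : 0 ≤ T) (hsupp : tsupport φ ⊆ Ioo 0 T ×ˢ univ)
    {v : XX d → Euc d} {g : XX d → ℝ} {γ : ℝ → Euc d}
    (hvγ : IntervalIntegrable (fun s => v (s, γ s)) volume 0 T)
    (hgγ : IntervalIntegrable (fun s => g (s, γ s)) volume 0 T) {y : Euc d}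
    (hγ : ∀ t ∈ Icc 0 T, γ t = y + ∫ s in (0:ℝ)..t, v (s, γ s)) :
    ∫ t in Ioo 0 T, weakIntegrand φ v g (t, γ t) * Real.exp (∫ s in (0:ℝ)..t, g (s, γ s)) = 0 := by
  -- `Φ` along `(γ, ∫ g)` is `φ (t, γ t) * exp (∫₀ᵗ g)`; its chain-rule derivative is the integrand.
  set w : ℝ → Euc d × ℝ := fun s => (v (s, γ s), g (s, γ s))
  have hw : IntervalIntegrable w volume 0 T := ⟨hvγ.1.prodMk hgγ.1, hvγ.2.prodMk hgγ.2⟩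
  set Φ : ℝ × (Euc d × ℝ) → ℝ := fun p => φ (p.1, p.2.1) * Real.exp p.2.2
  have hΦ : ContDiff ℝ 1 Φ :=
    (hφ.comp (contDiff_fst.prodMk (contDiff_fst.comp contDiff_snd))).mul
      (Real.contDiff_exp.comp (contDiff_snd.comp contDiff_snd))
  have hcurve : ∀ t ∈ uIcc 0 T,
      (y, (0:ℝ)) + ∫ s in (0:ℝ)..t, w s = (γ t, ∫ s in (0:ℝ)..t, g (s, γ s)) := by
    intro t ht
    have hwt := hw.mono_set (uIcc_subset_uIcc left_mem_uIcc ht)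
    rw [uIcc_of_le hT] at ht
    have hfst : (∫ s in (0:ℝ)..t, w s).1 = ∫ s in (0:ℝ)..t, v (s, γ s) :=
      ((ContinuousLinearMap.fst ℝ (Euc d) ℝ).intervalIntegral_comp_comm hwt).symm
    have hsnd : (∫ s in (0:ℝ)..t, w s).2 = ∫ s in (0:ℝ)..t, g (s, γ s) :=
      ((ContinuousLinearMap.snd ℝ (Euc d) ℝ).intervalIntegral_comp_comm hwt).symm
    rw [hγ t ht]
    exact Prod.ext (by rw [Prod.fst_add, hfst]) (by rw [Prod.snd_add, hsnd, zero_add])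
  have hφT : ∀ t ∉ Ioo 0 T, ∀ z, φ (t, z) = 0 := fun t ht z =>
    image_eq_zero_of_notMem_tsupport fun hmem => ht (hsupp hmem).1
  have hFTC := integral_fderiv_along_primitive_eq_sub hΦ hw (y, 0)
  simp only [Φ, hφT T (fun h => h.2.false), hφT 0 (fun h => h.1.false), zero_mul, sub_zero] at hFTC
  rw [← integral_Ioc_eq_integral_Ioo, ← intervalIntegral.integral_of_le hT]
  refine (intervalIntegral.integral_congr fun t ht => ?_).trans hFTC
  simp only [hcurve t ht]
  exact (fderiv_mul_exp_apply (hφ.differentiable one_ne_zero _) _ _ _ _).symm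

theorem integrable_weakIntegrand_along_flow {φ : XX d → ℝ} (hφ : ContDiff ℝ 1 φ)
    (hφc : HasCompactSupport φ) {v : XX d → Euc d} {g : XX d → ℝ} (hv : Measurable v)
    (hg : Measurable g) {Cv Cg : ℝ → ℝ} (hCv : IntegrableOn Cv (Ioo 0 1))
    (hvC : ∀ t ∈ Icc (0:ℝ) 1, ∀ y, ‖v (t, y)‖ ≤ Cv t) (hCg : IntegrableOn Cg (Ioo 0 1))
    (hgC : ∀ t ∈ Icc (0:ℝ) 1, ∀ y, |g (t, y)| ≤ Cg t) (ρ₀ : Measure (Euc d)) [IsFiniteMeasure ρ₀]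
    {X : Euc d → ℝ → Euc d} (hX : Measurable (Function.uncurry X)) {T : ℝ} (hT : T ≤ 1) :
    Integrable (fun p : ℝ × Euc d =>
        weakIntegrand φ v g (p.1, X p.2 p.1) * Real.exp (growthExponent g X p.2 p.1))
      ((volume.restrict (Ioo 0 T)).prod ρ₀) := by
  obtain ⟨A, hA⟩ := (hφ.continuous_fderiv one_ne_zero).bounded_above_of_compact_support
    (hφc.fderiv ℝ)
  obtain ⟨B, hB⟩ := hφ.continuous.bounded_above_of_compact_support hφc
  have hsub : Ioo 0 T ⊆ Ioo (0:ℝ) 1 := Ioo_subset_Ioo_right hT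
  have hbound : IntegrableOn
      (fun t => (A * (1 + Cv t) + B * Cg t) * Real.exp (∫ s in (0:ℝ)..1, Cg s)) (Ioo 0 T) :=
    ((((integrableOn_const measure_Ioo_lt_top.ne).add (hCv.mono_set hsub)).const_mul A).add
      ((hCg.mono_set hsub).const_mul B)).mul_const _
  have hmeas : Measurable fun p : ℝ × Euc d =>
      weakIntegrand φ v g (p.1, X p.2 p.1) * Real.exp (growthExponent g X p.2 p.1) :=
    ((measurable_weakIntegrand hφ hv hg).comp
      (measurable_fst.prodMk (hX.comp measurable_swap))).mul
      (Real.measurable_exp.comp ((measurable_growthExponent hg hX).comp measurable_swap))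
  refine (Integrable.comp_fst hbound ρ₀).mono' hmeas.aestronglyMeasurable ?_
  filter_upwards [Measure.quasiMeasurePreserving_fst.ae (ae_restrict_mem measurableSet_Ioo)]
    with p hp
  have hp1 : p.1 ∈ Icc (0:ℝ) 1 := ⟨hp.1.le, hp.2.le.trans hT⟩
  have hA0 : 0 ≤ A := (norm_nonneg _).trans (hA 0)
  have hB0 : 0 ≤ B := (norm_nonneg _).trans (hB 0)
  have hle : |weakIntegrand φ v g (p.1, X p.2 p.1)| ≤ A * (1 + Cv p.1) + B * Cg p.1 :=
    (abs_weakIntegrand_le hA hB v g _).trans (by gcongr; exacts [hvC _ hp1 _, hgC _ hp1 _])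
  rw [norm_mul, Real.norm_eq_abs, Real.norm_of_nonneg (Real.exp_pos _).le]
  exact mul_le_mul hle (Real.exp_le_exp.2 (growthExponent_le hCg hgC X p.2 hp1))
    (Real.exp_pos _).le ((abs_nonneg _).trans hle)

theorem integral_weakIntegrand_pushforwardCurve_eq_zero {φ : XX d → ℝ} (hφ : ContDiff ℝ 1 φ)
    (hφc : HasCompactSupport φ) {T : ℝ} (hT : T ∈ Icc (0:ℝ) 1)
    (hsupp : tsupport φ ⊆ Ioo 0 T ×ˢ univ) {v : XX d → Euc d} {g : XX d → ℝ}
    (hv : Measurable v) (hg : Measurable g) {Cv Cg : ℝ → ℝ} (hCv : IntegrableOn Cv (Ioo 0 1))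
    (hvC : ∀ t ∈ Icc (0:ℝ) 1, ∀ y, ‖v (t, y)‖ ≤ Cv t) (hCg : IntegrableOn Cg (Ioo 0 1))
    (hgC : ∀ t ∈ Icc (0:ℝ) 1, ∀ y, |g (t, y)| ≤ Cg t) (ρ₀ : Measure (Euc d)) [IsFiniteMeasure ρ₀]
    {X : Euc d → ℝ → Euc d} (hX : Measurable (Function.uncurry X))
    (hflow : ∀ᵐ x ∂ρ₀, ∀ t ∈ Icc (0:ℝ) T, X x t = x + ∫ s in (0:ℝ)..t, v (s, X x s)) :
    ∫ t in Ioo 0 T, ∫ y, weakIntegrand φ v g (t, y) ∂pushforwardCurve ρ₀ g X t = 0 := by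
  have hinner : ∀ t, ∫ y, weakIntegrand φ v g (t, y) ∂pushforwardCurve ρ₀ g X t
      = ∫ x, weakIntegrand φ v g (t, X x t) * Real.exp (growthExponent g X x t) ∂ρ₀ := fun t =>
    integral_pushforwardCurve hg hX ρ₀
      ((measurable_weakIntegrand hφ hv hg).comp measurable_prodMk_left) t
  simp_rw [hinner]
  rw [integral_integral_swap
    (integrable_weakIntegrand_along_flow hφ hφc hv hg hCv hvC hCg hgC ρ₀ hX hT.2)]
  refine (integral_congr_ae ?_).trans (integral_zero _ _)
  filter_upwards [hflow] with x hx
  have hXx : Measurable (X x) := hX.comp measurable_prodMk_left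
  exact integral_weakIntegrand_along_characteristic_eq_zero hφ hT.1 hsupp
    (intervalIntegrable_along_curve hv hXx hCv hvC hT)
    (intervalIntegrable_along_curve hg hXx hCg hgC hT) hx

theorem pushforward_is_solution_general (d : ℕ)
    (v : XX d → Euc d) (g : XX d → ℝ) (hv : Measurable v) (hg : Measurable g)
    (Cv : ℝ → ℝ) (hCvInt : IntegrableOn Cv (Ioo (0:ℝ) 1))
    (hCv : ∀ t ∈ Icc (0:ℝ) 1, (∀ x : Euc d, ‖v (t, x)‖ ≤ Cv t) ∧
      LipschitzWith (Real.toNNReal (Cv t)) (fun x : Euc d => v (t, x)))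
    (Cg : ℝ → ℝ) (hCgInt : IntegrableOn Cg (Ioo (0:ℝ) 1))
    (hCg : ∀ t ∈ Icc (0:ℝ) 1, (∀ x : Euc d, |g (t, x)| ≤ Cg t) ∧
      LipschitzWith (Real.toNNReal (Cg t)) (fun x : Euc d => g (t, x)))
    (ρ₀ : Measure (Euc d)) (hρ₀ : IsFiniteMeasure ρ₀)
    (X : Euc d → ℝ → Euc d) (hX : Measurable fun p : Euc d × ℝ => X p.1 p.2)
    (tbar : ℝ) (htbar : tbar ∈ Ioc (0:ℝ) 1)
    (hflow : ∀ᵐ x ∂ρ₀, ∀ t ∈ Icc (0:ℝ) tbar,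
      X x t = x + ∫ s in (0:ℝ)..t, v (s, X x s)) :
    ∃ ρ : ℝ → Measure (Euc d),
      (∀ t, ρ t = Measure.map (fun x => X x t)
        (ρ₀.withDensity fun x =>
          ENNReal.ofReal (Real.exp (∫ s in (0:ℝ)..t, g (s, X x s))))) ∧
      (∀ φ : Euc d → ℝ, Continuous φ → (∃ M, ∀ x, |φ x| ≤ M) →
        ContinuousOn (fun t => ∫ x, φ x ∂(ρ t)) (Icc (0:ℝ) tbar)) ∧
      (∀ φ : XX d → ℝ, ContDiff ℝ (⊤ : ℕ∞) φ → HasCompactSupport φ →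
        tsupport φ ⊆ Ioo (0:ℝ) tbar ×ˢ (Set.univ : Set (Euc d)) →
        (∫ t in Ioo (0:ℝ) tbar,
          ∫ x, (fderiv ℝ φ (t, x) (1, v (t, x)) + φ (t, x) * g (t, x)) ∂(ρ t)) = 0) := by
  have htbar' : tbar ∈ Icc (0:ℝ) 1 := ⟨htbar.1.le, htbar.2⟩
  have hvC : ∀ t ∈ Icc (0:ℝ) 1, ∀ y, ‖v (t, y)‖ ≤ Cv t := fun t ht => (hCv t ht).1
  have hgC : ∀ t ∈ Icc (0:ℝ) 1, ∀ y, |g (t, y)| ≤ Cg t := fun t ht => (hCg t ht).1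
  refine ⟨pushforwardCurve ρ₀ g X, fun t => rfl, ?_, ?_⟩
  · rintro φ hφ ⟨M, hM⟩
    exact continuousOn_integral_pushforwardCurve hv hg hCvInt hvC hCgInt hgC ρ₀ hX htbar' hflow
      hφ hM
  · intro φ hφ hφc hsupp
    exact integral_weakIntegrand_pushforwardCurve_eq_zero (hφ.of_le (by norm_num)) hφc htbar'
      hsupp hv hg hCvInt hvC hCgInt hgC ρ₀ hX hflow

/-- **Push-forward representations yield solutions.**
If `v, g` are Borel with `∫₀¹ (sup_x |·| + Lip(·)) dt < ∞`, `ρ₀ ∈ M⁺(ℝ^d)`,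
and `X` is the (measurable) flow of `γ' = v(t,γ)` defined beyond some
`t̄ ∈ (0,1]` for `ρ₀`-a.e. starting point, then
`ρ_t = (X_·(t))_# (ρ₀ · e^{∫₀ᵗ g(s,X(s)) ds})` is a narrowly continuous
distributional solution of `∂ₜ ρ + div (vρ) = gρ` on `(0,t̄) × ℝ^d`. -/
theorem pushforward_is_solution (d : ℕ) (hd : 1 ≤ d)
    (v : XX d → Euc d) (g : XX d → ℝ) (hv : Measurable v) (hg : Measurable g)
    (Cv : ℝ → ℝ) (hCvInt : IntegrableOn Cv (Ioo (0:ℝ) 1))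
    (hCv : ∀ t ∈ Icc (0:ℝ) 1, (∀ x : Euc d, ‖v (t, x)‖ ≤ Cv t) ∧
      LipschitzWith (Real.toNNReal (Cv t)) (fun x : Euc d => v (t, x)))
    (Cg : ℝ → ℝ) (hCgInt : IntegrableOn Cg (Ioo (0:ℝ) 1))
    (hCg : ∀ t ∈ Icc (0:ℝ) 1, (∀ x : Euc d, |g (t, x)| ≤ Cg t) ∧
      LipschitzWith (Real.toNNReal (Cg t)) (fun x : Euc d => g (t, x)))
    (ρ₀ : Measure (Euc d)) (hρ₀ : IsFiniteMeasure ρ₀)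
    (X : Euc d → ℝ → Euc d) (hX : Measurable fun p : Euc d × ℝ => X p.1 p.2)
    (tbar : ℝ) (htbar : tbar ∈ Ioc (0:ℝ) 1)
    (hflow : ∀ᵐ x ∂ρ₀, ∀ t ∈ Icc (0:ℝ) tbar,
      X x t = x + ∫ s in (0:ℝ)..t, v (s, X x s)) :
    ∃ ρ : ℝ → Measure (Euc d),
      (∀ t, ρ t = Measure.map (fun x => X x t)
        (ρ₀.withDensity fun x =>
          ENNReal.ofReal (Real.exp (∫ s in (0:ℝ)..t, g (s, X x s))))) ∧
      (∀ φ : Euc d → ℝ, Continuous φ → (∃ M, ∀ x, |φ x| ≤ M) →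
        ContinuousOn (fun t => ∫ x, φ x ∂(ρ t)) (Icc (0:ℝ) tbar)) ∧
      (∀ φ : XX d → ℝ, ContDiff ℝ (⊤ : ℕ∞) φ → HasCompactSupport φ →
        tsupport φ ⊆ Ioo (0:ℝ) tbar ×ˢ (Set.univ : Set (Euc d)) →
        (∫ t in Ioo (0:ℝ) tbar,
          ∫ x, (fderiv ℝ φ (t, x) (1, v (t, x)) + φ (t, x) * g (t, x)) ∂(ρ t)) = 0) :=
  pushforward_is_solution_general d v g hv hg Cv hCvInt hCv Cg hCgInt hCg ρ₀ hρ₀ X hX tbar htbar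
    hflow

end Paper
end
end

section
/- Narrow continuity of cone-valued curves: Let V ⊂ ℝ^d be the closure of a bounded domain and ρ_t : [0,1] → 𝒞_V. Then the following are equivalent: (i) t ↦ ρ_t is narrowly continuous; (ii) ρ_t = h(t)δ_{γ(t)} with h ∈ C[0,1] and γ continuous on the set {h > 0} := {t ∈ [0,1] : h(t) > 0}. -/
open MeasureTheory Set Filter Topology
open scoped ENNReal NNReal

noncomputable section

namespace Paper

variable {d : ℕ}

/-!
Against `h δ_γ` a test function `φ` integrates to `h · φ(γ)`. Testing with `1` and with the
coordinate functions shows that `h` and `h γ` are continuous, hence so is `γ = (h γ) / h` where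
`h > 0`. Conversely `h · φ(γ)` is continuous where `h > 0`, and near a zero of `h` it is squeezed
to `0` because `φ` is bounded on the compact set `V`.
-/

section

variable {𝕜 E X : Type*} [NormedField 𝕜] [NormedAddCommGroup E] [NormedSpace 𝕜 E]
  [TopologicalSpace X] {f : X → 𝕜} {g : X → E} {s : Set X}

theorem ContinuousOn.smul_of_bound {C : ℝ} (hf : ContinuousOn f s)
    (hg : ContinuousOn g {x | x ∈ s ∧ f x ≠ 0}) (hC : ∀ x ∈ s, ‖g x‖ ≤ C) :
    ContinuousOn (fun x => f x • g x) s := by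
  intro x₀ hx₀
  by_cases hfx₀ : f x₀ = 0
  · have hf₀ : Tendsto f (𝓝[s] x₀) (𝓝 0) := hfx₀ ▸ hf x₀ hx₀
    rw [ContinuousWithinAt, hfx₀, zero_smul]
    exact hf₀.zero_smul_isBoundedUnder_le
      ⟨C, eventually_map.2 (eventually_nhdsWithin_of_forall hC)⟩
  · have hnhds : {x | x ∈ s ∧ f x ≠ 0} ∈ 𝓝[s] x₀ :=
      inter_mem self_mem_nhdsWithin ((hf x₀ hx₀).eventually_ne hfx₀)
    exact ((hf.mono fun _ hx => hx.1).smul hg x₀ ⟨hx₀, hfx₀⟩).mono_of_mem_nhdsWithin hnhds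

theorem ContinuousOn.of_smul (hf : ContinuousOn f s)
    (hfg : ContinuousOn (fun x => f x • g x) s) :
    ContinuousOn g {x | x ∈ s ∧ f x ≠ 0} := by
  have hsub : {x | x ∈ s ∧ f x ≠ 0} ⊆ s := fun _ hx => hx.1
  refine (((hf.mono hsub).inv₀ fun _ hx => hx.2).smul (hfg.mono hsub)).congr fun x hx => ?_
  exact (inv_smul_smul₀ hx.2 (g x)).symm

end

theorem PiLp.continuousOn_iff {p : ℝ≥0∞} {ι X : Type*} [TopologicalSpace X] {β : ι → Type*}
    [∀ i, TopologicalSpace (β i)] {γ : X → PiLp p β} {s : Set X} :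
    ContinuousOn γ s ↔ ∀ i, ContinuousOn (fun x => γ x i) s := by
  rw [← (PiLp.homeomorph p β).comp_continuousOn_iff, continuousOn_pi]
  rfl

theorem integral_ofReal_smul_dirac {α E : Type*} [MeasurableSpace α]
    [MeasurableSingletonClass α] [NormedAddCommGroup E] [NormedSpace ℝ E] [CompleteSpace E]
    {a : ℝ} (ha : 0 ≤ a) (x : α) (φ : α → E) :
    ∫ y, φ y ∂(ENNReal.ofReal a • Measure.dirac x) = a • φ x := by
  rw [integral_smul_measure, integral_dirac, ENNReal.toReal_ofReal ha]

theorem narrow_continuity_cone_curves_general (d : ℕ) (V : Set (Euc d))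
    (hV : IsClosureOfBoundedDomain V)
    (ρ : ℝ → Measure (Euc d)) (hcone : ∀ t ∈ Icc (0:ℝ) 1, ρ t ∈ coneSet V) :
    (∀ φ : Euc d → ℝ, Continuous φ →
        ContinuousOn (fun t => ∫ x, φ x ∂(ρ t)) (Icc (0:ℝ) 1)) ↔
    (∃ (h : ℝ → ℝ) (γ : ℝ → Euc d),
      (∀ t ∈ Icc (0:ℝ) 1, 0 ≤ h t ∧ γ t ∈ V ∧
        ρ t = ENNReal.ofReal (h t) • Measure.dirac (γ t)) ∧
      ContinuousOn h (Icc (0:ℝ) 1) ∧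
      ContinuousOn γ {t | t ∈ Icc (0:ℝ) 1 ∧ 0 < h t}) := by
  constructor
  · intro hnarrow
    choose! h γ hh hγV hρ using hcone
    have hint (φ : Euc d → ℝ) : ∀ t ∈ Icc (0:ℝ) 1, ∫ y, φ y ∂(ρ t) = h t * φ (γ t) :=
      fun t ht => by rw [hρ t ht, integral_ofReal_smul_dirac (hh t ht), smul_eq_mul]
    have hmass : ContinuousOn h (Icc (0:ℝ) 1) :=
      (hnarrow (fun _ => 1) continuous_const).congr fun t ht => by simp [hint _ t ht]
    have hmoment : ContinuousOn (fun t => h t • γ t) (Icc (0:ℝ) 1) :=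
      PiLp.continuousOn_iff.2 fun i =>
        (hnarrow _ (EuclideanSpace.proj i).continuous).congr fun t ht => by simp [hint _ t ht]
    exact ⟨h, γ, fun t ht => ⟨hh t ht, hγV t ht, hρ t ht⟩, hmass,
      (ContinuousOn.of_smul hmass hmoment).mono fun t ht => ⟨ht.1, ht.2.ne'⟩⟩
  · rintro ⟨h, γ, hrep, hh, hγ⟩ φ hφ
    obtain ⟨U, -, -, -, hU, rfl⟩ := hV
    obtain ⟨C, hC⟩ := hU.isCompact_closure.exists_bound_of_continuousOn hφ.continuousOn
    have hhφγ : ContinuousOn (fun t => h t • φ (γ t)) (Icc (0:ℝ) 1) :=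
      ContinuousOn.smul_of_bound hh
        (hφ.comp_continuousOn (hγ.mono fun t ht => ⟨ht.1, (hrep t ht.1).1.lt_of_ne' ht.2⟩))
        fun t ht => hC _ (hrep t ht).2.1
    refine hhφγ.congr fun t ht => ?_
    rw [(hrep t ht).2.2, integral_ofReal_smul_dirac (hrep t ht).1]

/-- **Narrow continuity of cone-valued curves.**
A curve `ρ : [0,1] → 𝒞_V` is narrowly continuous iff it can be written as
`ρ_t = h(t) δ_{γ(t)}` with `h` continuous on `[0,1]` and `γ` continuous on
`{h > 0}`. -/
theorem narrow_continuity_cone_curves (d : ℕ) (hd : 1 ≤ d) (V : Set (Euc d))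
    (hV : IsClosureOfBoundedDomain V)
    (ρ : ℝ → Measure (Euc d)) (hcone : ∀ t ∈ Icc (0:ℝ) 1, ρ t ∈ coneSet V) :
    (∀ φ : Euc d → ℝ, Continuous φ →
        ContinuousOn (fun t => ∫ x, φ x ∂(ρ t)) (Icc (0:ℝ) 1)) ↔
    (∃ (h : ℝ → ℝ) (γ : ℝ → Euc d),
      (∀ t ∈ Icc (0:ℝ) 1, 0 ≤ h t ∧ γ t ∈ V ∧
        ρ t = ENNReal.ofReal (h t) • Measure.dirac (γ t)) ∧
      ContinuousOn h (Icc (0:ℝ) 1) ∧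
      ContinuousOn γ {t | t ∈ Icc (0:ℝ) 1 ∧ 0 < h t}) :=
  narrow_continuity_cone_curves_general d V hV ρ hcone

end Paper
end
end

section
/- Measurability and continuity of evaluation functionals: Let V ⊂ ℝ^d be the closure of a bounded domain and φ : V × [0,∞) → ℝ satisfy φ(γ,0) = 0 for all γ ∈ V. For t ∈ [0,1] define Ψ_t : 𝒮_V → ℝ by Ψ_t(ρ) := φ(γ(t), h(t)) where ρ_t = h(t)δ_{γ(t)}. If φ is Borel measurable (respectively continuous), then Ψ_t is Borel measurable (respectively continuous) on (𝒮_V, D). -/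
open MeasureTheory Set Filter Topology
open scoped ENNReal NNReal

noncomputable section

namespace Paper

variable {d : ℕ}

/-!
At time `t` a curve of `𝒮_V` is a weighted Dirac mass `a δ_x`. Testing the flat distance
against the constants `±1` and against `-min 1 |· - x|` gives `|a - a'| ≤ D` and
`a' min(1, |x - x'|) ≤ D`, so the mass `a` is Lipschitz and, where it is positive, the
position `x` is continuous. Hence `Ψ = φ(x, a)` is Borel once `x` is fixed to be `0` where
`a = 0`, and continuous at curves of positive mass. At a curve of mass zero, `φ(·, 0) = 0`
and the compactness of `V` make `φ` uniformly small on `V × [0, δ)`.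
-/

lemma IsClosureOfBoundedDomain.isCompact {V : Set (Euc d)} (hV : IsClosureOfBoundedDomain V) :
    IsCompact V := by
  obtain ⟨U, -, -, -, hU, rfl⟩ := hV
  exact hU.isCompact_closure

lemma IsCompact.eventually_forall_abs_lt {X : Type*} [TopologicalSpace X] {K : Set X}
    (hK : IsCompact K) {φ : X × ℝ → ℝ} (hφ : Continuous φ) (hφ0 : ∀ x, φ (x, 0) = 0)
    {ε : ℝ} (hε : 0 < ε) : ∀ᶠ a in 𝓝 (0 : ℝ), ∀ x ∈ K, |φ (x, a)| < ε := by
  refine hK.eventually_forall_of_forall_eventually fun x _ => ?_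
  have hcont : ContinuousAt (fun p : ℝ × X => φ (p.2, p.1)) (0, x) := by fun_prop
  simpa [hφ0] using hcont.eventually (Metric.ball_mem_nhds (φ (x, 0)) hε)

lemma integral_ofReal_smul_dirac_s12 {a : ℝ} (ha : 0 ≤ a) (x : Euc d) (ψ : Euc d → ℝ) :
    ∫ z, ψ z ∂(ENNReal.ofReal a • Measure.dirac x) = a * ψ x := by
  rw [integral_smul_measure, integral_dirac, smul_eq_mul, ENNReal.toReal_ofReal ha]

lemma flatDist_self (μ : Measure (Euc d)) : flatDist μ μ = 0 := by
  have : {r : ℝ | ∃ ψ : Euc d → ℝ, Continuous ψ ∧ (∀ z, |ψ z| ≤ 1) ∧ LipschitzWith 1 ψ ∧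
      r = (∫ z, ψ z ∂μ) - ∫ z, ψ z ∂μ} = {0} :=
    Set.eq_singleton_iff_unique_mem.2 ⟨⟨0, continuous_const, by simp, LipschitzWith.const' 0,
      by simp⟩, by rintro r ⟨ψ, -, -, -, rfl⟩; exact sub_self _⟩
  rw [flatDist, this, csSup_singleton]

section FlatDist

variable {μ ν : Measure (Euc d)} [IsFiniteMeasure μ] [IsFiniteMeasure ν]

lemma integral_sub_integral_le_of_abs_le_one {ψ : Euc d → ℝ} (hψ : ∀ z, |ψ z| ≤ 1) :
    ∫ z, ψ z ∂μ - ∫ z, ψ z ∂ν ≤ μ.real univ + ν.real univ := by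
  have hbound (ρ : Measure (Euc d)) [IsFiniteMeasure ρ] : |∫ z, ψ z ∂ρ| ≤ ρ.real univ := by
    simpa using norm_integral_le_of_norm_le_const (μ := ρ) (f := ψ) (C := 1)
      (Eventually.of_forall fun z => by simpa using hψ z)
  linarith [abs_le.1 (hbound μ), abs_le.1 (hbound ν)]

lemma sub_le_flatDist {ψ : Euc d → ℝ} (hc : Continuous ψ) (hψ : ∀ z, |ψ z| ≤ 1)
    (hlip : LipschitzWith 1 ψ) : ∫ z, ψ z ∂μ - ∫ z, ψ z ∂ν ≤ flatDist μ ν := by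
  refine le_csSup ⟨μ.real univ + ν.real univ, ?_⟩ ⟨ψ, hc, hψ, hlip, rfl⟩
  rintro r ⟨ψ, -, hψ, -, rfl⟩
  exact integral_sub_integral_le_of_abs_le_one hψ

lemma flatDist_le : flatDist μ ν ≤ μ.real univ + ν.real univ := by
  refine csSup_le ⟨0, 0, continuous_const, by simp, LipschitzWith.const' 0, by simp⟩ ?_
  rintro r ⟨ψ, -, hψ, -, rfl⟩
  exact integral_sub_integral_le_of_abs_le_one hψ

lemma abs_measureReal_univ_sub_le_flatDist :
    |μ.real univ - ν.real univ| ≤ flatDist μ ν := by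
  have hconst (c : ℝ) (hc : |c| ≤ 1) : c * μ.real univ - c * ν.real univ ≤ flatDist μ ν := by
    simpa [mul_comm c] using sub_le_flatDist (μ := μ) (ν := ν) (ψ := fun _ => c)
      continuous_const (fun _ => hc) (LipschitzWith.const' c)
  rw [abs_sub_le_iff]
  constructor <;> [simpa using hconst 1 (by simp); linarith [hconst (-1) (by simp)]]

end FlatDist

lemma mul_min_one_dist_le_flatDist {a b : ℝ} (ha : 0 ≤ a) (hb : 0 ≤ b) (x y : Euc d) :
    b * min 1 (dist y x) ≤
      flatDist (ENNReal.ofReal a • Measure.dirac x) (ENNReal.ofReal b • Measure.dirac y) := by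
  have := Measure.smul_finite (Measure.dirac x) (ENNReal.ofReal_ne_top (r := a))
  have := Measure.smul_finite (Measure.dirac y) (ENNReal.ofReal_ne_top (r := b))
  have hlip : LipschitzWith 1 fun z : Euc d => min 1 (dist z x) := by
    simpa using ((LipschitzWith.const (1 : ℝ)).weaken zero_le_one).min (LipschitzWith.dist_left x)
  have hψ (z : Euc d) : |-min 1 (dist z x)| ≤ 1 := by
    rw [abs_neg, abs_of_nonneg (le_min zero_le_one dist_nonneg)]
    exact min_le_left _ _
  simpa [integral_ofReal_smul_dirac_s12 ha, integral_ofReal_smul_dirac_s12 hb] using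
    sub_le_flatDist (μ := ENNReal.ofReal a • Measure.dirac x)
      (ν := ENNReal.ofReal b • Measure.dirac y) (by fun_prop) hψ hlip.neg

namespace SCurve

variable {V : Set (Euc d)}

instance isFiniteMeasure_toFun (η : SCurve V) (s : ℝ) : IsFiniteMeasure (η.toFun s) := by
  obtain ⟨a, x, -, -, he⟩ := η.cone s
  rw [he]
  exact Measure.smul_finite _ ENNReal.ofReal_ne_top

def mass (η : SCurve V) (s : ℝ) : ℝ := (η.toFun s).real univ

lemma mass_nonneg (η : SCurve V) (s : ℝ) : 0 ≤ η.mass s := measureReal_nonneg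

lemma exists_eq_mass_smul_dirac (η : SCurve V) (s : ℝ) :
    ∃ x ∈ V, η.toFun s = ENNReal.ofReal (η.mass s) • Measure.dirac x := by
  obtain ⟨a, x, ha, hx, he⟩ := η.cone s
  refine ⟨x, hx, ?_⟩
  rw [mass, he, measureReal_def, Measure.smul_apply, measure_univ, smul_eq_mul, mul_one,
    ENNReal.toReal_ofReal ha]

open Classical in
def position (η : SCurve V) (s : ℝ) : Euc d :=
  if 0 < η.mass s then (η.exists_eq_mass_smul_dirac s).choose else 0

lemma position_mem {η : SCurve V} {s : ℝ} (h : 0 < η.mass s) : η.position s ∈ V := by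
  rw [position, if_pos h]
  exact (η.exists_eq_mass_smul_dirac s).choose_spec.1

lemma toFun_eq_mass_smul_dirac_position (η : SCurve V) (s : ℝ) :
    η.toFun s = ENNReal.ofReal (η.mass s) • Measure.dirac (η.position s) := by
  obtain ⟨x, -, hx⟩ := η.exists_eq_mass_smul_dirac s
  by_cases h : 0 < η.mass s
  · rw [position, if_pos h]
    exact (η.exists_eq_mass_smul_dirac s).choose_spec.2
  · rw [hx, ENNReal.ofReal_eq_zero.2 (not_lt.1 h), zero_smul, zero_smul]

lemma continuous_mass (η : SCurve V) : Continuous η.mass := by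
  show Continuous fun s => (η.toFun s).real univ
  simpa using η.narrow (fun _ => 1) continuous_const

lemma bddAbove_flatDist (η₁ η₂ : SCurve V) :
    BddAbove {r : ℝ | ∃ s ∈ Icc (0:ℝ) 1, r = flatDist (η₁.toFun s) (η₂.toFun s)} := by
  obtain ⟨C, hC⟩ := isCompact_Icc.bddAbove_image
    (η₁.continuous_mass.add η₂.continuous_mass).continuousOn
  exact ⟨C, by rintro r ⟨s, hs, rfl⟩; exact flatDist_le.trans (hC ⟨s, hs, rfl⟩)⟩

lemma flatDist_le_Ddist (η₁ η₂ : SCurve V) {s : ℝ} (hs : s ∈ Icc (0:ℝ) 1) :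
    flatDist (η₁.toFun s) (η₂.toFun s) ≤ Ddist η₁ η₂ :=
  le_csSup (bddAbove_flatDist η₁ η₂) ⟨s, hs, rfl⟩

lemma Ddist_self (η : SCurve V) : Ddist η η = 0 := by
  have : {r : ℝ | ∃ s ∈ Icc (0:ℝ) 1, r = flatDist (η.toFun s) (η.toFun s)} = {0} := by
    simp only [flatDist_self]
    exact Set.eq_singleton_iff_unique_mem.2 ⟨⟨0, left_mem_Icc.2 zero_le_one, rfl⟩,
      by rintro r ⟨s, -, rfl⟩; rfl⟩
  rw [Ddist, this, csSup_singleton]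

end SCurve

section Evaluation

variable {V : Set (Euc d)} {t : ℝ}

lemma abs_mass_sub_le_Ddist (ht : t ∈ Icc (0:ℝ) 1) (η η' : SCurve V) :
    |η.mass t - η'.mass t| ≤ Ddist η η' :=
  abs_measureReal_univ_sub_le_flatDist.trans (η.flatDist_le_Ddist η' ht)

lemma mass_mul_min_one_dist_le_Ddist (ht : t ∈ Icc (0:ℝ) 1) (η η' : SCurve V) :
    η'.mass t * min 1 (dist (η'.position t) (η.position t)) ≤ Ddist η η' := by
  have h := mul_min_one_dist_le_flatDist (η.mass_nonneg t) (η'.mass_nonneg t)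
    (η.position t) (η'.position t)
  rw [← η.toFun_eq_mass_smul_dirac_position, ← η'.toFun_eq_mass_smul_dirac_position] at h
  exact h.trans (η.flatDist_le_Ddist η' ht)

lemma exists_forall_Ddist_lt_dist_lt (ht : t ∈ Icc (0:ℝ) 1) {η : SCurve V}
    (hη : 0 < η.mass t) {r : ℝ} (hr : 0 < r) :
    ∃ δ > 0, ∀ η' : SCurve V, Ddist η η' < δ →
      0 < η'.mass t ∧ dist (η'.position t, η'.mass t) (η.position t, η.mass t) < r := by
  set a := η.mass t
  have hr1 : 0 < min r 1 := lt_min hr one_pos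
  refine ⟨min r (a / 2 * min r 1), by positivity, fun η' hη' => ?_⟩
  have hDr : Ddist η η' < r := hη'.trans_le (min_le_left _ _)
  have hDa : Ddist η η' < a / 2 * min r 1 := hη'.trans_le (min_le_right _ _)
  have hmass := abs_mass_sub_le_Ddist ht η η'
  have ha' : a / 2 < η'.mass t := by
    have : a / 2 * min r 1 ≤ a / 2 := mul_le_of_le_one_right (by positivity) (min_le_right _ _)
    linarith [(abs_le.1 hmass).2]
  have hmin : min 1 (dist (η'.position t) (η.position t)) < min r 1 := by
    by_contra! h
    have h1 := mul_le_mul_of_nonneg_left h (η'.mass_nonneg t)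
    have h2 := mul_lt_mul_of_pos_right ha' hr1
    linarith [mass_mul_min_one_dist_le_Ddist ht η η']
  have hdist : dist (η'.position t) (η.position t) < r := by
    rcases min_lt_iff.1 hmin with h | h
    · exact absurd h (min_le_right r 1).not_gt
    · exact h.trans_le (min_le_left _ _)
  refine ⟨by linarith, ?_⟩
  rw [Prod.dist_eq, Real.dist_eq, abs_sub_comm]
  exact max_lt hdist (hmass.trans_lt hDr)

lemma measurableSet_of_forall_exists_Ddist_lt {S : Set (SCurve V)}
    (h : ∀ η ∈ S, ∃ δ > 0, ∀ η', Ddist η η' < δ → η' ∈ S) : MeasurableSet S := by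
  let _ := Stop V
  refine MeasurableSpace.measurableSet_generateFrom
    (show IsOpen S from isOpen_iff_forall_mem_open.2 fun η hη => ?_)
  obtain ⟨δ, hδ, hball⟩ := h η hη
  exact ⟨{η' | Ddist η η' < δ}, hball,
    TopologicalSpace.isOpen_generateFrom_of_mem ⟨η, δ, hδ, rfl⟩, by simpa [η.Ddist_self]⟩

lemma measurable_mass (ht : t ∈ Icc (0:ℝ) 1) : Measurable fun η : SCurve V => η.mass t :=
  measurable_of_isOpen fun O hO => measurableSet_of_forall_exists_Ddist_lt fun η hη => by
    obtain ⟨ε, hε, hball⟩ := Metric.isOpen_iff.1 hO _ hη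
    refine ⟨ε, hε, fun η' h => hball ?_⟩
    rw [Metric.mem_ball, Real.dist_eq, abs_sub_comm]
    exact (abs_mass_sub_le_Ddist ht η η').trans_lt h

lemma measurable_position (ht : t ∈ Icc (0:ℝ) 1) :
    Measurable fun η : SCurve V => η.position t := by
  refine measurable_of_isOpen fun O hO => ?_
  have hpre : (fun η : SCurve V => η.position t) ⁻¹' O =
      {η | 0 < η.mass t ∧ η.position t ∈ O} ∪ {η | ¬ 0 < η.mass t ∧ (0 : Euc d) ∈ O} := by
    ext η
    by_cases h : 0 < η.mass t
    · simp [h, SCurve.position]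
    · simp [h, SCurve.position, not_lt.1 h]
  rw [hpre]
  refine .union (measurableSet_of_forall_exists_Ddist_lt ?_)
    ((measurableSet_lt measurable_const (measurable_mass ht)).compl.inter (.const _))
  rintro η ⟨hη, hηO⟩
  obtain ⟨r, hr, hball⟩ := Metric.isOpen_iff.1 hO _ hηO
  obtain ⟨δ, hδ, hclose⟩ := exists_forall_Ddist_lt_dist_lt ht hη hr
  refine ⟨δ, hδ, fun η' h => ?_⟩
  obtain ⟨hpos, hd⟩ := hclose η' h
  rw [Prod.dist_eq] at hd
  exact ⟨hpos, hball ((le_max_left _ _).trans_lt hd)⟩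

lemma eq_apply_position_mass {φ : Euc d × ℝ → ℝ} (hφ0 : ∀ x, φ (x, 0) = 0)
    {Ψ : SCurve V → ℝ} (hΨ : ∀ (η : SCurve V) (a : ℝ) (x : Euc d), 0 ≤ a → x ∈ V →
      η.toFun t = ENNReal.ofReal a • Measure.dirac x → Ψ η = φ (x, a)) (η : SCurve V) :
    Ψ η = φ (η.position t, η.mass t) := by
  by_cases h : 0 < η.mass t
  · exact hΨ η _ _ (η.mass_nonneg t) (SCurve.position_mem h)
      (η.toFun_eq_mass_smul_dirac_position t)
  · obtain ⟨x, hx, he⟩ := η.exists_eq_mass_smul_dirac t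
    rw [hΨ η _ x (η.mass_nonneg t) hx he, le_antisymm (not_lt.1 h) (η.mass_nonneg t), hφ0, hφ0]

end Evaluation

theorem evaluation_measurable_continuous_general (d : ℕ) (V : Set (Euc d))
    (hV : IsClosureOfBoundedDomain V)
    (t : ℝ) (ht : t ∈ Icc (0:ℝ) 1)
    (φ : Euc d × ℝ → ℝ) (hφ0 : ∀ x : Euc d, φ (x, 0) = 0)
    (Ψ : SCurve V → ℝ)
    (hΨ : ∀ (η : SCurve V) (a : ℝ) (x : Euc d), 0 ≤ a → x ∈ V →
      η.toFun t = ENNReal.ofReal a • Measure.dirac x → Ψ η = φ (x, a)) :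
    (Measurable φ → Measurable Ψ) ∧
    (Continuous φ → ∀ (η : SCurve V) (ε : ℝ), 0 < ε → ∃ δ > 0,
      ∀ η' : SCurve V, Ddist η η' < δ → |Ψ η' - Ψ η| < ε) := by
  have hΨ' := eq_apply_position_mass hφ0 hΨ
  refine ⟨fun hφ => ?_, fun hφ η ε hε => ?_⟩
  · rw [funext hΨ']
    exact hφ.comp ((measurable_position ht).prodMk (measurable_mass ht))
  rcases (η.mass_nonneg t).eq_or_lt with h0 | hpos
  · obtain ⟨δ, hδ, hsmall⟩ :=
      Metric.eventually_nhds_iff.1 (IsCompact.eventually_forall_abs_lt hV.isCompact hφ hφ0 hε)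
    refine ⟨δ, hδ, fun η' hη' => ?_⟩
    obtain ⟨x, hx, he⟩ := η'.exists_eq_mass_smul_dirac t
    have hmass : dist (η'.mass t) 0 < δ := by
      simpa [← h0, Real.dist_eq, abs_sub_comm] using (abs_mass_sub_le_Ddist ht η η').trans_lt hη'
    rw [hΨ η' _ x (η'.mass_nonneg t) hx he, hΨ' η, ← h0, hφ0, sub_zero]
    exact hsmall hmass x hx
  · obtain ⟨r, hr, hφr⟩ := Metric.continuousAt_iff.1 hφ.continuousAt ε hε
    obtain ⟨δ, hδ, hclose⟩ := exists_forall_Ddist_lt_dist_lt ht hpos hr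
    refine ⟨δ, hδ, fun η' hη' => ?_⟩
    rw [hΨ', hΨ', ← Real.dist_eq]
    exact hφr (hclose η' hη').2

/-- **Measurability and continuity of evaluation functionals.**
Let `φ : V × [0,∞) → ℝ` with `φ(·,0) = 0`, and for `t ∈ [0,1]` let
`Ψ : 𝒮_V → ℝ` be defined by `Ψ(ρ) = φ(γ(t), h(t))` where `ρ_t = h(t)δ_{γ(t)}`.
If `φ` is Borel (resp. continuous), then `Ψ` is Borel (resp. continuous) with
respect to `D`. -/
theorem evaluation_measurable_continuous (d : ℕ) (hd : 1 ≤ d) (V : Set (Euc d))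
    (hV : IsClosureOfBoundedDomain V)
    (t : ℝ) (ht : t ∈ Icc (0:ℝ) 1)
    (φ : Euc d × ℝ → ℝ) (hφ0 : ∀ x : Euc d, φ (x, 0) = 0)
    (Ψ : SCurve V → ℝ)
    (hΨ : ∀ (η : SCurve V) (a : ℝ) (x : Euc d), 0 ≤ a → x ∈ V →
      η.toFun t = ENNReal.ofReal a • Measure.dirac x → Ψ η = φ (x, a)) :
    (Measurable φ → Measurable Ψ) ∧
    (Continuous φ → ∀ (η : SCurve V) (ε : ℝ), 0 < ε → ∃ δ > 0,
      ∀ η' : SCurve V, Ddist η η' < δ → |Ψ η' - Ψ η| < ε) :=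
  evaluation_measurable_continuous_general d V hV t ht φ hφ0 Ψ hΨ

end Paper
end
end
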